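/- Entrywise comparison of quasi-stationary and stationary distributions: under (HP1)–(HP3), for every ε > 0 there exists N such that for all n ≥ N and all y ∈ X_n ∖ {x_n}, μ⋆_n(y) ≤ (1 + ε) · π_n(y). -/

import Mathlib

open Finset Filter

/-- The kernel of the chain killed at `x`: all entries from or to `x` are set to zero.
For `y, z ≠ x` the powers of `killed P x` agree with the powers of the principal
submatrix `[P]_x` of `P` obtained by deleting the row and the column indexed by `x`. -/
def killed {n : ℕ} (P : Matrix (Fin n) (Fin n) ℝ) (x : Fin n) :
    Matrix (Fin n) (Fin n) ℝ :=
  Matrix.of fun y z => if y = x ∨ z = x then 0 else P y z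

/-- The no-hit probability `ℙ_α(τ_x > t) = Σ_{y ≠ x} Σ_{z ≠ x} α(y)·([P]_x)^t(y,z)`. -/
def noHit {n : ℕ} (P : Matrix (Fin n) (Fin n) ℝ) (x : Fin n)
    (a : Fin n → ℝ) (t : ℕ) : ℝ :=
  ∑ y ∈ Finset.univ.erase x, ∑ z ∈ Finset.univ.erase x, a y * ((killed P x) ^ t) y z

/-- The expected number of returns to `x` within time `T`:
`R_T(x) = Σ_{t=0}^{T} P^t(x,x)`. -/
def returns {n : ℕ} (P : Matrix (Fin n) (Fin n) ℝ) (x : Fin n) (T : ℕ) : ℝ :=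
  ∑ t ∈ Finset.range (T + 1), (P ^ t) x x

/-!
Call a state `z ≠ x` good if the chain started at `z` makes at most `δ` expected visits to `x`
at the times `1, …, T`. Stationarity gives `∑ z, π z * visits z = T * π x ≤ δ²`, so by Markov's
inequality the bad states carry `π`-mass at most `δ`. After time `T` the chain is mixed,
`P^t(z, w) ≤ π w + δ² / n²`, so the killed chain started at a good state survives `2T` steps and
ends in a good state with probability at least `1 - 3δ`. Testing `μ K^{2T} = λ^{2T} μ` on the good
states, which `μ` charges by irreducibility of `K`, gives `λ^T ≥ λ^{2T} ≥ 1 - 3δ`. Finally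
`λ^T μ = μ K^T ≤ μ P^T ≤ π + δ² / n² ≤ (1 + δ²) π` by (HP1) and (HP3).
-/

open Matrix

section Eigenvectors

variable {ι R : Type*} [Fintype ι] [DecidableEq ι] [CommSemiring R]

theorem vecMul_pow_of_vecMul_eq_smul {K : Matrix ι ι R} {μ : ι → R} {r : R}
    (h : μ ᵥ* K = r • μ) (m : ℕ) : μ ᵥ* (K ^ m) = r ^ m • μ := by
  induction m with
  | zero => simp
  | succ m ih => rw [pow_succ, ← vecMul_vecMul, ih, smul_vecMul, h, smul_smul, ← pow_succ]

theorem vecMul_pow_of_vecMul_eq {P : Matrix ι ι R} {π : ι → R} (h : π ᵥ* P = π) (m : ℕ) :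
    π ᵥ* (P ^ m) = π := by
  simpa using vecMul_pow_of_vecMul_eq_smul (K := P) (μ := π) (r := 1) (by rwa [one_smul]) m

end Eigenvectors

section NonnegativeMatrix

variable {ι : Type*} [Fintype ι]

theorem pow_add_apply_le_of_pow_apply_le [DecidableEq ι] {P : Matrix ι ι ℝ}
    (hP : P ∈ rowStochastic ℝ ι) {T : ℕ} {f : ι → ℝ} (hT : ∀ w z, (P ^ T) w z ≤ f z)
    (s : ℕ) (y z : ι) : (P ^ (s + T)) y z ≤ f z := by
  have hPs := pow_mem hP s
  rw [pow_add, mul_apply]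
  calc ∑ w, (P ^ s) y w * (P ^ T) w z ≤ ∑ w, (P ^ s) y w * f z :=
        sum_le_sum fun w _ => mul_le_mul_of_nonneg_left (hT w z) (nonneg_of_mem_rowStochastic hPs)
    _ = f z := by rw [← sum_mul, sum_row_of_mem_rowStochastic hPs, one_mul]

theorem mul_apply_le_of_vecMul_eq_smul {M : Matrix ι ι ℝ} {μ : ι → ℝ} {r b : ℝ}
    (hμ0 : ∀ i, 0 ≤ μ i) (hμ1 : ∑ i, μ i = 1) (hμ : μ ᵥ* M = r • μ) {j : ι}
    (hM : ∀ i, M i j ≤ b) : r * μ j ≤ b := by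
  calc r * μ j = ∑ i, μ i * M i j := by
        simpa [vecMul, dotProduct] using (congrFun hμ j).symm
    _ ≤ ∑ i, μ i * b := sum_le_sum fun i _ => mul_le_mul_of_nonneg_left (hM i) (hμ0 i)
    _ = b := by rw [← sum_mul, hμ1, one_mul]

/-- A Collatz–Wielandt type lower bound on an eigenvalue. -/
theorem le_of_vecMul_eq_smul {M : Matrix ι ι ℝ} {μ : ι → ℝ} {r a : ℝ}
    (hM : ∀ i j, 0 ≤ M i j) (hμ0 : ∀ i, 0 ≤ μ i) (hμ : μ ᵥ* M = r • μ) {S : Finset ι}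
    (hS : 0 < ∑ i ∈ S, μ i) (hrow : ∀ i ∈ S, a ≤ ∑ j ∈ S, M i j) : a ≤ r := by
  refine le_of_mul_le_mul_right ?_ hS
  calc a * ∑ i ∈ S, μ i = ∑ i ∈ S, μ i * a := by rw [mul_comm, sum_mul]
    _ ≤ ∑ i ∈ S, μ i * ∑ j ∈ S, M i j :=
        sum_le_sum fun i hi => mul_le_mul_of_nonneg_left (hrow i hi) (hμ0 i)
    _ ≤ ∑ i, μ i * ∑ j ∈ S, M i j :=
        sum_le_sum_of_subset_of_nonneg (subset_univ S) fun i _ _ =>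
          mul_nonneg (hμ0 i) (sum_nonneg fun j _ => hM i j)
    _ = ∑ j ∈ S, (μ ᵥ* M) j := by
        simp only [vecMul, dotProduct, mul_sum]
        exact sum_comm
    _ = r * ∑ i ∈ S, μ i := by simp [hμ, mul_sum]

theorem pos_of_vecMul_pow_eq_smul [DecidableEq ι] {K : Matrix ι ι ℝ} {μ : ι → ℝ} {r : ℝ}
    (hK : ∀ i j, 0 ≤ K i j) (hμ0 : ∀ i, 0 ≤ μ i) (hr : 0 < r) (hμ : μ ᵥ* K = r • μ)
    {i j : ι} (hi : 0 < μ i) {t : ℕ} (hij : 0 < (K ^ t) i j) : 0 < μ j := by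
  have hle : μ i * (K ^ t) i j ≤ r ^ t * μ j := by
    calc μ i * (K ^ t) i j ≤ ∑ k, μ k * (K ^ t) k j :=
          single_le_sum (fun k _ => mul_nonneg (hμ0 k) (pow_apply_nonneg hK t k j)) (mem_univ i)
      _ = r ^ t * μ j := by
          simpa [vecMul, dotProduct] using congrFun (vecMul_pow_of_vecMul_eq_smul hμ t) j
  exact pos_of_mul_pos_right ((mul_pos hi hij).trans_le hle) (pow_pos hr t).le

end NonnegativeMatrix

section Visits

variable {ι : Type*} [Fintype ι] [DecidableEq ι] {P : Matrix ι ι ℝ} {x : ι}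

/-- The expected number of visits to `x` at the times `1, …, T` of the chain started at `z`. -/
def expectedVisits (P : Matrix ι ι ℝ) (x : ι) (T : ℕ) (z : ι) : ℝ :=
  ∑ t ∈ range T, (P ^ (t + 1)) z x

theorem expectedVisits_nonneg (hP : ∀ i j, 0 ≤ P i j) (T : ℕ) (z : ι) :
    0 ≤ expectedVisits P x T z :=
  sum_nonneg fun _ _ => pow_apply_nonneg hP _ z x

theorem sum_mul_expectedVisits {π : ι → ℝ} (hπ : π ᵥ* P = π) (T : ℕ) :
    ∑ z, π z * expectedVisits P x T z = T * π x := by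
  simp only [expectedVisits, mul_sum]
  rw [sum_comm]
  calc ∑ t ∈ range T, ∑ z, π z * (P ^ (t + 1)) z x = ∑ _t ∈ range T, π x :=
        sum_congr rfl fun t _ => by
          simpa [vecMul, dotProduct] using congrFun (vecMul_pow_of_vecMul_eq hπ (t + 1)) x
    _ = T * π x := by simp

theorem sum_filter_lt_expectedVisits_le (hP : ∀ i j, 0 ≤ P i j) {π : ι → ℝ}
    (hπ0 : ∀ i, 0 ≤ π i) (hπ : π ᵥ* P = π) {T : ℕ} {δ : ℝ} (hδ : 0 < δ)
    (hTπ : T * π x ≤ δ ^ 2) (s : Finset ι) :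
    ∑ z ∈ s.filter (fun z => δ < expectedVisits P x T z), π z ≤ δ := by
  refine le_of_mul_le_mul_left ?_ hδ
  calc δ * ∑ z ∈ s.filter (fun z => δ < expectedVisits P x T z), π z
      = ∑ z ∈ s.filter (fun z => δ < expectedVisits P x T z), π z * δ := by
        rw [mul_comm, sum_mul]
    _ ≤ ∑ z ∈ s.filter (fun z => δ < expectedVisits P x T z), π z * expectedVisits P x T z :=
        sum_le_sum fun z hz => mul_le_mul_of_nonneg_left (mem_filter.1 hz).2.le (hπ0 z)
    _ ≤ ∑ z, π z * expectedVisits P x T z :=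
        sum_le_sum_of_subset_of_nonneg (subset_univ _) fun z _ _ =>
          mul_nonneg (hπ0 z) (expectedVisits_nonneg hP T z)
    _ = T * π x := sum_mul_expectedVisits hπ T
    _ ≤ δ * δ := by rwa [← sq]

theorem expectedVisits_add_self_le (hP : P ∈ rowStochastic ℝ ι) {T : ℕ} {f : ι → ℝ}
    (hT : ∀ w z, (P ^ T) w z ≤ f z) (z : ι) :
    expectedVisits P x (T + T) z ≤ expectedVisits P x T z + T * f x := by
  rw [expectedVisits, sum_range_add, expectedVisits]
  gcongr
  calc ∑ t ∈ range T, (P ^ (T + t + 1)) z x ≤ ∑ _t ∈ range T, f x :=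
        sum_le_sum fun t _ => by
          rw [show T + t + 1 = (t + 1) + T by ring]
          exact pow_add_apply_le_of_pow_apply_le hP hT _ z x
    _ = T * f x := by simp

noncomputable def lowVisitStates (P : Matrix ι ι ℝ) (x : ι) (T : ℕ) (δ : ℝ) : Finset ι :=
  (univ.erase x).filter fun z => expectedVisits P x T z ≤ δ

theorem sum_lowVisitStates_add_sum_filter_lt {M : Type*} [AddCommMonoid M] (T : ℕ) (δ : ℝ)
    (f : ι → M) :
    ∑ z ∈ lowVisitStates P x T δ, f z
      + ∑ z ∈ (univ.erase x).filter (fun z => δ < expectedVisits P x T z), f z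
      = ∑ z ∈ univ.erase x, f z := by
  simp only [lowVisitStates, ← not_le]
  exact sum_filter_add_sum_filter_not _ _ _

end Visits

section Killed

variable {n : ℕ} {P : Matrix (Fin n) (Fin n) ℝ} {x : Fin n}

theorem killed_apply_of_ne {y z : Fin n} (hy : y ≠ x) (hz : z ≠ x) : killed P x y z = P y z := by
  simp [killed, hy, hz]

theorem killed_nonneg (hP : ∀ y z, 0 ≤ P y z) (y z : Fin n) : 0 ≤ killed P x y z := by
  simp only [killed, of_apply]
  split
  · exact le_rfl
  · exact hP y z

theorem killed_pow_apply_le (hP : ∀ y z, 0 ≤ P y z) (m : ℕ) (y z : Fin n) :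
    (killed P x ^ m) y z ≤ (P ^ m) y z := by
  induction m generalizing z with
  | zero => exact le_rfl
  | succ m ih =>
    rw [pow_succ, pow_succ, mul_apply, mul_apply]
    refine sum_le_sum fun w _ => mul_le_mul (ih w) ?_ (killed_nonneg hP w z)
      (pow_apply_nonneg hP m y w)
    simp only [killed, of_apply]
    split
    · exact hP w z
    · exact le_rfl

theorem killed_pow_apply_self {y : Fin n} (hy : y ≠ x) (m : ℕ) : (killed P x ^ m) y x = 0 := by
  cases m with
  | zero => exact one_apply_ne hy
  | succ m =>
    rw [pow_succ, mul_apply]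
    exact sum_eq_zero fun w _ => by simp [killed]

theorem sum_killed_apply (hP : P ∈ rowStochastic ℝ (Fin n)) {w : Fin n} (hw : w ≠ x) :
    ∑ z, killed P x w z = 1 - P w x := by
  calc ∑ z, killed P x w z = ∑ z ∈ univ.erase x, P w z := by
        rw [← sum_erase univ (by simp [killed] : killed P x w x = 0)]
        exact sum_congr rfl fun z hz => killed_apply_of_ne hw (ne_of_mem_erase hz)
    _ = 1 - P w x := by rw [sum_erase_eq_sub (mem_univ x), sum_row_of_mem_rowStochastic hP]

theorem sum_killed_pow_sub_le_sum_killed_pow_succ (hP : P ∈ rowStochastic ℝ (Fin n))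
    {z : Fin n} (hz : z ≠ x) (m : ℕ) :
    ∑ w, (killed P x ^ m) z w - (P ^ (m + 1)) z x ≤ ∑ w, (killed P x ^ (m + 1)) z w := by
  have hP0 : ∀ i j, 0 ≤ P i j := fun i j => nonneg_of_mem_rowStochastic hP
  have hstep : ∑ w, (killed P x ^ (m + 1)) z w = ∑ w, (killed P x ^ m) z w * (1 - P w x) := by
    simp only [pow_succ, mul_apply]
    rw [sum_comm]
    refine sum_congr rfl fun w _ => ?_
    rw [← mul_sum]
    rcases eq_or_ne w x with rfl | hw
    · rw [killed_pow_apply_self hz, zero_mul, zero_mul]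
    · rw [sum_killed_apply hP hw]
  rw [hstep, pow_succ, mul_apply]
  simp only [mul_sub, mul_one, sum_sub_distrib]
  gcongr with w
  · exact hP0 w x
  · exact killed_pow_apply_le hP0 m z w

/-- Union bound over the first visit to `x`: the mass lost by the killed chain up to time `m`
is at most the expected number of visits to `x` at the times `1, …, m`. -/
theorem one_sub_expectedVisits_le_sum_killed_pow (hP : P ∈ rowStochastic ℝ (Fin n))
    {z : Fin n} (hz : z ≠ x) (m : ℕ) :
    1 - expectedVisits P x m z ≤ ∑ w, (killed P x ^ m) z w := by
  induction m with
  | zero => simp [expectedVisits, one_apply]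
  | succ m ih =>
    have := sum_killed_pow_sub_le_sum_killed_pow_succ hP hz m
    rw [expectedVisits, sum_range_succ, ← expectedVisits]
    linarith

end Killed

section QuasiStationary

variable {n : ℕ} {P : Matrix (Fin n) (Fin n) ℝ} {x : Fin n} {π : Fin n → ℝ} {T : ℕ} {δ e : ℝ}

theorem lowVisitStates_nonempty (hP : ∀ i j, 0 ≤ P i j) (hπ0 : ∀ i, 0 ≤ π i)
    (hπ1 : ∑ i, π i = 1) (hπ : π ᵥ* P = π) (hT : 0 < T) (hδ : 0 < δ) (hδ3 : δ ≤ 1 / 3)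
    (hTπ : T * π x ≤ δ ^ 2) : (lowVisitStates P x T δ).Nonempty := by
  have hπx : π x ≤ δ ^ 2 := le_trans (le_mul_of_one_le_left (hπ0 x) (by exact_mod_cast hT)) hTπ
  have hsplit := sum_lowVisitStates_add_sum_filter_lt (x := x) (P := P) T δ π
  rw [sum_erase_eq_sub (mem_univ x), hπ1] at hsplit
  have hhigh := sum_filter_lt_expectedVisits_le hP hπ0 hπ hδ hTπ (univ.erase x)
  refine nonempty_of_sum_ne_zero (f := π) fun hlow => ?_
  nlinarith

theorem one_sub_three_mul_le_sum_killed_pow_lowVisitStates (hP : P ∈ rowStochastic ℝ (Fin n))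
    (hπ0 : ∀ i, 0 ≤ π i) (hπ : π ᵥ* P = π) (hmix : ∀ w z, (P ^ T) w z ≤ π z + e)
    (hδ : 0 < δ) (hδ3 : δ ≤ 1 / 3) (hTπ : T * π x ≤ δ ^ 2) (hne : n * e ≤ δ ^ 2)
    (hTe : T * e ≤ δ ^ 2) (he : 0 ≤ e) {z : Fin n} (hz : z ∈ lowVisitStates P x T δ) :
    1 - 3 * δ ≤ ∑ w ∈ lowVisitStates P x T δ, (killed P x ^ (T + T)) z w := by
  have hP0 : ∀ i j, 0 ≤ P i j := fun i j => nonneg_of_mem_rowStochastic hP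
  obtain ⟨hzx, hzδ⟩ : z ≠ x ∧ expectedVisits P x T z ≤ δ := by
    simpa [lowVisitStates] using hz
  set B := (univ.erase x).filter fun w => δ < expectedVisits P x T w
  have hsurv : 1 - (δ + T * (π x + e)) ≤ ∑ w, (killed P x ^ (T + T)) z w :=
    le_trans (by linarith [expectedVisits_add_self_le hP hmix (x := x) z])
      (one_sub_expectedVisits_le_sum_killed_pow hP hzx (T + T))
  have hsplit : ∑ w ∈ lowVisitStates P x T δ, (killed P x ^ (T + T)) z w
      + ∑ w ∈ B, (killed P x ^ (T + T)) z w = ∑ w, (killed P x ^ (T + T)) z w := by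
    rw [sum_lowVisitStates_add_sum_filter_lt, sum_erase _ (killed_pow_apply_self hzx _)]
  have hB : ∑ w ∈ B, (killed P x ^ (T + T)) z w ≤ δ + n * e := by
    calc ∑ w ∈ B, (killed P x ^ (T + T)) z w ≤ ∑ w ∈ B, (π w + e) :=
          sum_le_sum fun w _ => (killed_pow_apply_le hP0 _ z w).trans
            (pow_add_apply_le_of_pow_apply_le hP hmix T z w)
      _ = ∑ w ∈ B, π w + B.card * e := by rw [sum_add_distrib, sum_const, nsmul_eq_mul]
      _ ≤ δ + n * e := by
          gcongr
          · exact sum_filter_lt_expectedVisits_le hP0 hπ0 hπ hδ hTπ _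
          · exact_mod_cast B.card_le_univ.trans_eq (Fintype.card_fin n)
  nlinarith

theorem one_sub_three_mul_le_pow_of_mixing {μ : Fin n → ℝ} {lam : ℝ}
    (hP : P ∈ rowStochastic ℝ (Fin n)) (hπ0 : ∀ i, 0 ≤ π i) (hπ1 : ∑ i, π i = 1)
    (hπ : π ᵥ* P = π) (hK : ∀ y z, y ≠ x → z ≠ x → ∃ t : ℕ, 0 < (killed P x ^ t) y z)
    (hμ0 : ∀ i, 0 ≤ μ i) (hμx : μ x = 0) (hμ1 : ∑ i, μ i = 1)
    (hμ : μ ᵥ* killed P x = lam • μ) (hlam : lam ∈ Set.Ioo 0 1)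
    (hmix : ∀ w z, (P ^ T) w z ≤ π z + e) (hδ : 0 < δ) (hδ3 : δ ≤ 1 / 3)
    (hTπ : T * π x ≤ δ ^ 2) (hne : n * e ≤ δ ^ 2) (hTe : T * e ≤ δ ^ 2) (he : 0 ≤ e) :
    1 - 3 * δ ≤ lam ^ T := by
  have hP0 : ∀ i j, 0 ≤ P i j := fun i j => nonneg_of_mem_rowStochastic hP
  rcases Nat.eq_zero_or_pos T with rfl | hT
  · rw [pow_zero]
    linarith
  obtain ⟨z, hz⟩ := lowVisitStates_nonempty hP0 hπ0 hπ1 hπ hT hδ hδ3 hTπ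
  obtain ⟨z₀, -, hz₀⟩ := exists_lt_of_sum_lt (s := univ) (f := fun _ => (0 : ℝ)) (g := μ)
    (by simp [hμ1])
  have hz₀x : z₀ ≠ x := by
    rintro rfl
    exact hz₀.ne' hμx
  obtain ⟨t, ht⟩ := hK z₀ z hz₀x (mem_erase.1 (mem_filter.1 hz).1).1
  have hμz : 0 < μ z := pos_of_vecMul_pow_eq_smul (killed_nonneg hP0) hμ0 hlam.1 hμ hz₀ ht
  calc 1 - 3 * δ ≤ lam ^ (T + T) :=
        le_of_vecMul_eq_smul (pow_apply_nonneg (killed_nonneg hP0) _) hμ0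
          (vecMul_pow_of_vecMul_eq_smul hμ _) (hμz.trans_le (single_le_sum (fun i _ => hμ0 i) hz))
          fun z hz => one_sub_three_mul_le_sum_killed_pow_lowVisitStates hP hπ0 hπ hmix hδ hδ3
            hTπ hne hTe he hz
    _ ≤ lam ^ T := pow_le_pow_of_le_one hlam.1.le hlam.2.le (by omega)

theorem quasistationary_le_of_mixing {μ : Fin n → ℝ} {lam : ℝ}
    (hP : P ∈ rowStochastic ℝ (Fin n)) (hπ0 : ∀ i, 0 ≤ π i) (hπ1 : ∑ i, π i = 1)
    (hπ : π ᵥ* P = π) (hK : ∀ y z, y ≠ x → z ≠ x → ∃ t : ℕ, 0 < (killed P x ^ t) y z)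
    (hμ0 : ∀ i, 0 ≤ μ i) (hμx : μ x = 0) (hμ1 : ∑ i, μ i = 1)
    (hμ : μ ᵥ* killed P x = lam • μ) (hlam : lam ∈ Set.Ioo 0 1)
    (hmix : ∀ w z, (P ^ T) w z ≤ π z + δ ^ 2 / n ^ 2) (hδ : 0 < δ) (hδ3 : δ ≤ 1 / 3)
    (hTπ : T * π x ≤ δ ^ 2) (hπn : ∀ i, 1 ≤ n ^ 2 * π i) (y : Fin n) :
    (1 - 3 * δ) * μ y ≤ (1 + δ ^ 2) * π y := by
  have hP0 : ∀ i j, 0 ≤ P i j := fun i j => nonneg_of_mem_rowStochastic hP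
  have hn : (1 : ℝ) ≤ n := Nat.one_le_cast.2 x.pos
  have hn2 : (0 : ℝ) < n ^ 2 := by positivity
  have hne : n * (δ ^ 2 / n ^ 2) ≤ δ ^ 2 := by
    calc n * (δ ^ 2 / n ^ 2) = δ ^ 2 / n := by field_simp
      _ ≤ δ ^ 2 := div_le_self (sq_nonneg δ) hn
  have hTn : (T : ℝ) ≤ n ^ 2 := by
    calc (T : ℝ) ≤ T * (n ^ 2 * π x) := le_mul_of_one_le_right (Nat.cast_nonneg T) (hπn x)
      _ = n ^ 2 * (T * π x) := by ring
      _ ≤ n ^ 2 * 1 := by gcongr; nlinarith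
      _ = n ^ 2 := mul_one _
  have hTe : T * (δ ^ 2 / n ^ 2) ≤ δ ^ 2 := by
    calc T * (δ ^ 2 / n ^ 2) ≤ n ^ 2 * (δ ^ 2 / n ^ 2) := by gcongr
      _ = δ ^ 2 := by field_simp
  have hey : δ ^ 2 / n ^ 2 ≤ δ ^ 2 * π y := by
    rw [div_le_iff₀ hn2]
    nlinarith [hπn y]
  calc (1 - 3 * δ) * μ y ≤ lam ^ T * μ y :=
        mul_le_mul_of_nonneg_right (one_sub_three_mul_le_pow_of_mixing hP hπ0 hπ1 hπ hK hμ0 hμx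
          hμ1 hμ hlam hmix hδ hδ3 hTπ hne hTe (by positivity)) (hμ0 y)
    _ ≤ π y + δ ^ 2 / n ^ 2 :=
        mul_apply_le_of_vecMul_eq_smul hμ0 hμ1 (vecMul_pow_of_vecMul_eq_smul hμ T) fun w =>
          (killed_pow_apply_le hP0 T w y).trans (hmix w y)
    _ ≤ (1 + δ ^ 2) * π y := by linarith

end QuasiStationary

theorem le_add_div_sq_of_rpow_mul_abs_sub_lt {a b η c : ℝ} {n : ℕ} (hn : 0 < n) (hc : 2 ≤ c)
    (h : (n : ℝ) ^ c * |a - b| < η) : a ≤ b + η / n ^ 2 := by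
  have hn1 : (1 : ℝ) ≤ n := Nat.one_le_cast.2 hn
  have hpow : (n : ℝ) ^ 2 ≤ (n : ℝ) ^ c := by
    rw [← Real.rpow_natCast]
    exact Real.rpow_le_rpow_of_exponent_le hn1 (by norm_num [hc])
  have h2 : (n : ℝ) ^ 2 * |a - b| < η :=
    (mul_le_mul_of_nonneg_right hpow (abs_nonneg _)).trans_lt h
  rw [← sub_le_iff_le_add', le_div_iff₀ (by positivity)]
  nlinarith [le_abs_self (a - b)]

theorem quasistationary_entrywise_upper_bound_general
    (P : (n : ℕ) → Matrix (Fin n) (Fin n) ℝ)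
    (pi : (n : ℕ) → Fin n → ℝ)
    (x : (n : ℕ) → Fin n)
    (T : ℕ → ℕ) (c : ℝ)
    (hc : 2 < c)
    (hnn : ∀ n : ℕ, 2 ≤ n → ∀ y z : Fin n, 0 ≤ P n y z)
    (hrow : ∀ n : ℕ, 2 ≤ n → ∀ y : Fin n, ∑ z, P n y z = 1)
    (hpinn : ∀ n : ℕ, 2 ≤ n → ∀ y : Fin n, 0 ≤ pi n y)
    (hpisum : ∀ n : ℕ, 2 ≤ n → ∑ y, pi n y = 1)
    (hpistat : ∀ n : ℕ, 2 ≤ n → Matrix.vecMul (pi n) (P n) = pi n)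
    (hkirr : ∀ n : ℕ, 2 ≤ n → ∀ y z : Fin n, y ≠ x n → z ≠ x n →
      ∃ t : ℕ, 0 < ((killed (P n) (x n)) ^ t) y z)
    (lam : ℕ → ℝ) (mu : (n : ℕ) → Fin n → ℝ)
    (hlam : ∀ n : ℕ, 2 ≤ n → lam n ∈ Set.Ioo (0 : ℝ) 1)
    (hmunn : ∀ n : ℕ, 2 ≤ n → ∀ y : Fin n, 0 ≤ mu n y)
    (hmux : ∀ n : ℕ, 2 ≤ n → mu n (x n) = 0)
    (hmusum : ∀ n : ℕ, 2 ≤ n → ∑ y, mu n y = 1)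
    (hmuqs : ∀ n : ℕ, 2 ≤ n →
      Matrix.vecMul (mu n) (killed (P n) (x n)) = lam n • mu n)
    (HP1 : ∀ ε : ℝ, 0 < ε → ∃ N : ℕ, ∀ n : ℕ, N ≤ n → ∀ y z : Fin n,
      (n : ℝ) ^ c * |(P n ^ T n) y z - pi n z| < ε)
    (HP2 : ∀ ε : ℝ, 0 < ε → ∃ N : ℕ, ∀ n : ℕ, N ≤ n → ∀ y : Fin n,
      (T n : ℝ) * pi n y < ε)
    (HP3 : ∀ M : ℝ, ∃ N : ℕ, ∀ n : ℕ, N ≤ n → ∀ y : Fin n,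
      M < (n : ℝ) ^ 2 * pi n y)
    :
    ∀ ε : ℝ, 0 < ε → ∃ N : ℕ, ∀ n : ℕ, N ≤ n → ∀ y : Fin n, y ≠ x n →
      mu n y ≤ (1 + ε) * pi n y := by
  intro ε hε
  obtain ⟨δ, hδ, hδε, hδ1⟩ : ∃ δ : ℝ, 0 < δ ∧ 16 * δ ≤ ε ∧ 16 * δ ≤ 1 :=
    ⟨min ε 1 / 16, by positivity, by linarith [min_le_left ε 1], by linarith [min_le_right ε 1]⟩
  obtain ⟨N, hN⟩ := eventually_atTop.1 <| (eventually_ge_atTop 2).and <|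
    (eventually_atTop.2 (HP1 (δ ^ 2) (by positivity))).and <|
    (eventually_atTop.2 (HP2 (δ ^ 2) (by positivity))).and (eventually_atTop.2 (HP3 1))
  refine ⟨N, fun n hn y _ => ?_⟩
  obtain ⟨h2, hmix, hTπ, hπn⟩ := hN n hn
  have hP : P n ∈ rowStochastic ℝ (Fin n) := mem_rowStochastic_iff_sum.2 ⟨hnn n h2, hrow n h2⟩
  have key := quasistationary_le_of_mixing hP (hpinn n h2) (hpisum n h2) (hpistat n h2)
    (hkirr n h2) (hmunn n h2) (hmux n h2) (hmusum n h2) (hmuqs n h2) (hlam n h2)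
    (fun w z => le_add_div_sq_of_rpow_mul_abs_sub_lt (by omega) hc.le (hmix w z)) hδ
    (by linarith) (hTπ (x n)).le (fun i => (hπn i).le) y
  refine le_of_mul_le_mul_left ?_ (by linarith : (0 : ℝ) < 1 - 3 * δ)
  calc (1 - 3 * δ) * mu n y ≤ (1 + δ ^ 2) * pi n y := key
    _ ≤ (1 + ε) * (1 - 3 * δ) * pi n y :=
        mul_le_mul_of_nonneg_right (by nlinarith) (hpinn n h2 y)
    _ = (1 - 3 * δ) * ((1 + ε) * pi n y) := by ring

theorem quasistationary_entrywise_upper_bound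
    (P : (n : ℕ) → Matrix (Fin n) (Fin n) ℝ)
    (pi : (n : ℕ) → Fin n → ℝ)
    (x : (n : ℕ) → Fin n)
    (T : ℕ → ℕ) (c : ℝ)
    (hc : 2 < c)
    (hT : Filter.Tendsto T Filter.atTop Filter.atTop)
    (hnn : ∀ n : ℕ, 2 ≤ n → ∀ y z : Fin n, 0 ≤ P n y z)
    (hrow : ∀ n : ℕ, 2 ≤ n → ∀ y : Fin n, ∑ z, P n y z = 1)
    (hirr : ∀ n : ℕ, 2 ≤ n → ∀ y z : Fin n, ∃ t : ℕ, 0 < (P n ^ t) y z)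
    (hpinn : ∀ n : ℕ, 2 ≤ n → ∀ y : Fin n, 0 ≤ pi n y)
    (hpisum : ∀ n : ℕ, 2 ≤ n → ∑ y, pi n y = 1)
    (hpistat : ∀ n : ℕ, 2 ≤ n → Matrix.vecMul (pi n) (P n) = pi n)
    (hpiuniq : ∀ n : ℕ, 2 ≤ n → ∀ rho : Fin n → ℝ, (∀ y, 0 ≤ rho y) →
      (∑ y, rho y = 1) → Matrix.vecMul rho (P n) = rho → rho = pi n)
    (hkirr : ∀ n : ℕ, 2 ≤ n → ∀ y z : Fin n, y ≠ x n → z ≠ x n →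
      ∃ t : ℕ, 0 < ((killed (P n) (x n)) ^ t) y z)
    (lam : ℕ → ℝ) (mu : (n : ℕ) → Fin n → ℝ)
    (hlam : ∀ n : ℕ, 2 ≤ n → lam n ∈ Set.Ioo (0 : ℝ) 1)
    (hmunn : ∀ n : ℕ, 2 ≤ n → ∀ y : Fin n, 0 ≤ mu n y)
    (hmux : ∀ n : ℕ, 2 ≤ n → mu n (x n) = 0)
    (hmusum : ∀ n : ℕ, 2 ≤ n → ∑ y, mu n y = 1)
    (hmuqs : ∀ n : ℕ, 2 ≤ n →
      Matrix.vecMul (mu n) (killed (P n) (x n)) = lam n • mu n)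
    (HP1 : ∀ ε : ℝ, 0 < ε → ∃ N : ℕ, ∀ n : ℕ, N ≤ n → ∀ y z : Fin n,
      (n : ℝ) ^ c * |(P n ^ T n) y z - pi n z| < ε)
    (HP2 : ∀ ε : ℝ, 0 < ε → ∃ N : ℕ, ∀ n : ℕ, N ≤ n → ∀ y : Fin n,
      (T n : ℝ) * pi n y < ε)
    (HP3 : ∀ M : ℝ, ∃ N : ℕ, ∀ n : ℕ, N ≤ n → ∀ y : Fin n,
      M < (n : ℝ) ^ 2 * pi n y)
    :
    ∀ ε : ℝ, 0 < ε → ∃ N : ℕ, ∀ n : ℕ, N ≤ n → ∀ y : Fin n, y ≠ x n →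
      mu n y ≤ (1 + ε) * pi n y :=
  quasistationary_entrywise_upper_bound_general P pi x T c hc hnn hrow hpinn hpisum hpistat hkirr
    lam mu hlam hmunn hmux hmusum hmuqs HP1 HP2 HP3
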